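/- arXiv:2401.10523 — 3 statements merged into one kernel-verified Lean document; each statement's English description precedes it below -/
import Mathlib

section
/- Let q ≥ 2 and let r, k, e be natural numbers with 1 ≤ k < r. Then (q^k · [r-1 choose k]_q · ∏_{i=1}^{k} (q^{r-1+e-i}+1) + [r-1 choose k-1]_q · ∏_{i=1}^{k-1} (q^{r-1+e-i}+1)) / ([r choose k]_q · ∏_{i=1}^{k} (q^{r+e-i}+1)) = (q^{2r+e-k-1} + q^r - q^{r+e-1} - 1) / ((q^r - 1)(q^{r+e-1}+1)), where [a choose b]_q denotes the Gaussian binomial coefficient. -/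
open Finset

/-- The Gaussian binomial coefficient `[a choose b]_q`, as a rational number. -/
def gbinom (q a b : ℕ) : ℚ :=
  ∏ i ∈ Finset.Icc 1 b, (((q : ℚ) ^ (a - b + i) - 1) / ((q : ℚ) ^ i - 1))

lemma pow_sub_one_ne (x : ℚ) (hx : 2 ≤ x) (m : ℕ) (hm : 1 ≤ m) : x ^ m - 1 ≠ 0 := by
  have h1 : (1:ℚ) < x := by linarith
  have := one_lt_pow₀ h1 (by omega : m ≠ 0)
  intro h; nlinarith

lemma pow_add_one_ne (x : ℚ) (hx : 2 ≤ x) (m : ℕ) : x ^ m + 1 ≠ 0 := by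
  have : (0:ℚ) < x ^ m := pow_pos (by linarith) m
  intro h; nlinarith

lemma prod_Icc_one (f : ℕ → ℚ) (m : ℕ) :
    ∏ i ∈ Finset.Icc 1 m, f i = ∏ j ∈ Finset.range m, f (j + 1) := by
  rw [← Finset.Ico_add_one_right_eq_Icc, Finset.prod_Ico_eq_prod_range]
  exact Finset.prod_congr rfl fun j _ => by rw [Nat.add_comm]

lemma aux (x : ℚ) (hx : 2 ≤ x) (n s e : ℕ) :
    (x ^ (n+1) * (∏ j ∈ range (n+1), (x ^ (s+1+j) - 1) / (x ^ (j+1) - 1)) *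
        (∏ j ∈ range (n+1), (x ^ (s+e+j) + 1)) +
      (∏ j ∈ range n, (x ^ (s+2+j) - 1) / (x ^ (j+1) - 1)) *
        (∏ j ∈ range n, (x ^ (s+e+1+j) + 1))) /
      ((∏ j ∈ range (n+1), (x ^ (s+2+j) - 1) / (x ^ (j+1) - 1)) *
        (∏ j ∈ range (n+1), (x ^ (s+e+1+j) + 1))) =
    (x ^ (n+2*s+e+2) + x ^ (n+s+2) - x ^ (n+s+e+1) - 1) /
      ((x ^ (n+s+2) - 1) * (x ^ (n+s+e+1) + 1)) := by
  have hNB : (∏ j ∈ range n, (x ^ (s+2+j) - 1)) ≠ 0 :=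
    prod_ne_zero_iff.2 fun j _ => pow_sub_one_ne x hx _ (by omega)
  have hDn : (∏ j ∈ range n, (x ^ (j+1) - 1)) ≠ 0 :=
    prod_ne_zero_iff.2 fun j _ => pow_sub_one_ne x hx _ (by omega)
  have hP : (∏ j ∈ range n, (x ^ (s+e+1+j) + 1)) ≠ 0 :=
    prod_ne_zero_iff.2 fun j _ => pow_add_one_ne x hx _
  rw [prod_div_distrib, prod_div_distrib, prod_div_distrib]
  have e1 : (∏ j ∈ range (n+1), (x ^ (s+1+j) - 1)) =
      (∏ j ∈ range n, (x ^ (s+2+j) - 1)) * (x ^ (s+1) - 1) := by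
    rw [prod_range_succ']
    congr 1
    exact prod_congr rfl fun j _ => by ring_nf
  have e2 : (∏ j ∈ range (n+1), (x ^ (s+2+j) - 1)) =
      (∏ j ∈ range n, (x ^ (s+2+j) - 1)) * (x ^ (n+s+2) - 1) := by
    rw [prod_range_succ, show s+2+n = n+s+2 from by omega]
  have e3 : (∏ j ∈ range (n+1), (x ^ (j+1) - 1)) =
      (∏ j ∈ range n, (x ^ (j+1) - 1)) * (x ^ (n+1) - 1) := prod_range_succ _ _
  have e4 : (∏ j ∈ range (n+1), (x ^ (s+e+j) + 1)) =
      (∏ j ∈ range n, (x ^ (s+e+1+j) + 1)) * (x ^ (s+e) + 1) := by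
    rw [prod_range_succ']
    congr 1
    exact prod_congr rfl fun j _ => by ring_nf
  have e5 : (∏ j ∈ range (n+1), (x ^ (s+e+1+j) + 1)) =
      (∏ j ∈ range n, (x ^ (s+e+1+j) + 1)) * (x ^ (n+s+e+1) + 1) := by
    rw [prod_range_succ, show s+e+1+n = n+s+e+1 from by omega]
  rw [e1, e2, e3, e4, e5]
  have h1 := pow_sub_one_ne x hx (n+1) (by omega)
  have h2 := pow_sub_one_ne x hx (n+s+2) (by omega)
  have h3 := pow_add_one_ne x hx (n+s+e+1)
  field_simp
  ring

/-- The fraction of `k`-spaces of a rank-`r` polar space with parameter `e`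
that lie in a degenerate hyperplane. -/
theorem stmt_1 (q r k e : ℕ) (hq : 2 ≤ q) (hk1 : 1 ≤ k) (hkr : k < r) :
    ((q : ℚ) ^ k * gbinom q (r - 1) k *
        (∏ i ∈ Finset.Icc 1 k, ((q : ℚ) ^ (r - 1 + e - i) + 1)) +
      gbinom q (r - 1) (k - 1) *
        (∏ i ∈ Finset.Icc 1 (k - 1), ((q : ℚ) ^ (r - 1 + e - i) + 1))) /
      (gbinom q r k * (∏ i ∈ Finset.Icc 1 k, ((q : ℚ) ^ (r + e - i) + 1))) =
    ((q : ℚ) ^ (2 * r + e - k - 1) + (q : ℚ) ^ r - (q : ℚ) ^ (r + e - 1) - 1) /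
      (((q : ℚ) ^ r - 1) * ((q : ℚ) ^ (r + e - 1) + 1)) := by
  set x : ℚ := (q : ℚ) with hxdef
  have hx : 2 ≤ x := by rw [hxdef]; exact_mod_cast hq
  obtain ⟨n, rfl⟩ : ∃ n, k = n + 1 := ⟨k - 1, by omega⟩
  obtain ⟨s, rfl⟩ : ∃ s, r = n + s + 2 := ⟨r - (n + 2), by omega⟩
  have G1 : gbinom q (n + s + 2 - 1) (n + 1) =
      ∏ j ∈ range (n+1), (x ^ (s+1+j) - 1) / (x ^ (j+1) - 1) := by
    unfold gbinom
    rw [prod_Icc_one]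
    exact prod_congr rfl fun j _ => by
      rw [show n + s + 2 - 1 - (n+1) + (j+1) = s+1+j from by omega]
  have G2 : gbinom q (n + s + 2 - 1) (n + 1 - 1) =
      ∏ j ∈ range n, (x ^ (s+2+j) - 1) / (x ^ (j+1) - 1) := by
    unfold gbinom
    rw [show n + 1 - 1 = n from rfl, prod_Icc_one]
    exact prod_congr rfl fun j _ => by
      rw [show n + s + 2 - 1 - n + (j+1) = s+2+j from by omega]
  have G3 : gbinom q (n + s + 2) (n + 1) =
      ∏ j ∈ range (n+1), (x ^ (s+2+j) - 1) / (x ^ (j+1) - 1) := by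
    unfold gbinom
    rw [prod_Icc_one]
    exact prod_congr rfl fun j _ => by
      rw [show n + s + 2 - (n+1) + (j+1) = s+2+j from by omega]
  have P1 : (∏ i ∈ Finset.Icc 1 (n+1), (x ^ (n + s + 2 - 1 + e - i) + 1)) =
      ∏ j ∈ range (n+1), (x ^ (s+e+j) + 1) := by
    rw [prod_Icc_one, ← prod_range_reflect (fun j => x ^ (s+e+j) + 1) (n+1)]
    refine prod_congr rfl fun j hj => ?_
    have hj' : j < n + 1 := mem_range.mp hj
    rw [show n + s + 2 - 1 + e - (j+1) = s + e + (n + 1 - 1 - j) from by omega]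
  have P2 : (∏ i ∈ Finset.Icc 1 (n+1-1), (x ^ (n + s + 2 - 1 + e - i) + 1)) =
      ∏ j ∈ range n, (x ^ (s+e+1+j) + 1) := by
    rw [show n + 1 - 1 = n from rfl, prod_Icc_one,
      ← prod_range_reflect (fun j => x ^ (s+e+1+j) + 1) n]
    refine prod_congr rfl fun j hj => ?_
    have hj' : j < n := mem_range.mp hj
    rw [show n + s + 2 - 1 + e - (j+1) = s + e + 1 + (n - 1 - j) from by omega]
  have P3 : (∏ i ∈ Finset.Icc 1 (n+1), (x ^ (n + s + 2 + e - i) + 1)) =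
      ∏ j ∈ range (n+1), (x ^ (s+e+1+j) + 1) := by
    rw [prod_Icc_one, ← prod_range_reflect (fun j => x ^ (s+e+1+j) + 1) (n+1)]
    refine prod_congr rfl fun j hj => ?_
    have hj' : j < n + 1 := mem_range.mp hj
    rw [show n + s + 2 + e - (j+1) = s + e + 1 + (n + 1 - 1 - j) from by omega]
  rw [G1, G2, G3, P1, P2, P3,
    show 2 * (n + s + 2) + e - (n + 1) - 1 = n + 2*s + e + 2 from by omega,
    show n + s + 2 + e - 1 = n + s + e + 1 from by omega]
  exact aux x hx n s e
end

section
/- Let q ≥ 2 be an integer and let r, k, e be natural numbers with 1 ≤ k ≤ r-1. Then ∏_{i=1}^{k-1} ((q^{r-i+1}-1)(q^{r+e-i}+1)) / ((q^{i+1}-1) · q^{2r+e-k-i}) ≤ 2^{k-1}. -/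
open Finset

private lemma key_ineq (Q x y z : ℚ) (hQ : 2 ≤ Q) (hx : 2 ≤ x) (hy : 4 ≤ y)
    (hz : 1 ≤ z) :
    (y * Q - 1) * (y * z + 1) * x ^ 2 ≤ 2 * (x * Q - 1) * (x * y ^ 2 * z) := by
  have hx0 : (0:ℚ) < x := by linarith
  have hy0 : (0:ℚ) < y := by linarith
  have hz0 : (0:ℚ) < z := by linarith
  have hQ0 : (0:ℚ) < Q := by linarith
  have h1 : 4 * (Q * (x^2 * y)) ≤ Q * (x^2 * y) * (y * z) := by
    have h4 : 4 ≤ y * z := by nlinarith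
    have hpos : 0 < Q * (x^2 * y) := by positivity
    nlinarith
  have h2 : 4 * (x * (y^2 * z)) ≤ (Q * x) * (x * (y^2 * z)) := by
    have h4 : 4 ≤ Q * x := by nlinarith
    have hpos : 0 < x * (y^2 * z) := by positivity
    nlinarith
  have h3 : 0 ≤ Q * (x^2 * (y^2 * z)) := by positivity
  have h4 : 0 ≤ x^2 * (y * z) := by positivity
  have h5 : 0 ≤ x^2 := by positivity
  nlinarith [h1, h2, h3, h4, h5]

private lemma sum_Icc_two_mul (n : ℕ) : (∑ i ∈ Finset.Icc 1 n, 2 * i) = n * (n + 1) := by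
  induction n with
  | zero => simp
  | succ n ih => rw [Finset.sum_Icc_succ_top (by omega), ih]; ring

/-- The accumulated multiplicative factor in the quantitative upper bound for
partial `(r,k)`-ovoids is at most `2^(k-1)`. -/
theorem stmt_3 (q r k e : ℕ) (hq : 2 ≤ q) (hk1 : 1 ≤ k) (hkr : k ≤ r - 1) :
    (∏ i ∈ Finset.Icc 1 (k - 1),
        (((q : ℚ) ^ (r - i + 1) - 1) * ((q : ℚ) ^ (r + e - i) + 1)) /
          (((q : ℚ) ^ (i + 1) - 1) * (q : ℚ) ^ (2 * r + e - k - i))) ≤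
      2 ^ (k - 1) := by
  set Q : ℚ := (q : ℚ) with hQdef
  have hQ2 : (2 : ℚ) ≤ Q := by rw [hQdef]; exact_mod_cast hq
  have hQ1 : (1 : ℚ) ≤ Q := by linarith
  have hQ0 : (0 : ℚ) < Q := by linarith
  have hterm : ∀ i ∈ Finset.Icc 1 (k - 1),
      ((Q ^ (r - i + 1) - 1) * (Q ^ (r + e - i) + 1)) /
          ((Q ^ (i + 1) - 1) * Q ^ (2 * r + e - k - i))
        ≤ 2 * Q ^ k / Q ^ (2 * i) := by
    intro i hi
    rw [Finset.mem_Icc] at hi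
    obtain ⟨hi1, hi2⟩ := hi
    have hir : i + 2 ≤ r := by omega
    obtain ⟨a, ha⟩ : ∃ a, r = i + a := ⟨r - i, by omega⟩
    have ha2 : 2 ≤ a := by omega
    have hkm : k + (2 * r + e - k - i) = i + a * 2 + e := by omega
    have e1 : r - i + 1 = a + 1 := by omega
    have e2 : r + e - i = a + e := by omega
    have hXQ : 2 ≤ Q ^ i := le_trans hQ2 (le_self_pow₀ hQ1 (by omega))
    have hB : 0 < (Q ^ (i + 1) - 1) * Q ^ (2 * r + e - k - i) := by
      have h1 : (2:ℚ) ≤ Q ^ (i+1) := le_trans hQ2 (le_self_pow₀ hQ1 (by omega))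
      have h2 := pow_pos hQ0 (2 * r + e - k - i)
      nlinarith
    have hD : (0:ℚ) < Q ^ (2 * i) := pow_pos hQ0 _
    rw [div_le_div_iff₀ hB hD, e1, e2]
    have hexp : Q ^ k * Q ^ (2 * r + e - k - i) = Q ^ i * (Q ^ a) ^ 2 * Q ^ e := by
      rw [← pow_add, hkm, pow_add, pow_add, pow_mul]
    have h2i : Q ^ (2 * i) = (Q ^ i) ^ 2 := by rw [two_mul, pow_add, sq]
    have key := key_ineq Q (Q ^ i) (Q ^ a) (Q ^ e) hQ2 hXQ
      (by
        calc (4:ℚ) = 2 ^ 2 := by norm_num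
        _ ≤ Q ^ 2 := by nlinarith
        _ ≤ Q ^ a := pow_le_pow_right₀ hQ1 ha2)
      (one_le_pow₀ hQ1)
    calc (Q ^ (a + 1) - 1) * (Q ^ (a + e) + 1) * Q ^ (2 * i)
        = (Q ^ a * Q - 1) * (Q ^ a * Q ^ e + 1) * (Q ^ i) ^ 2 := by
          rw [pow_succ, pow_add, h2i]
      _ ≤ 2 * (Q ^ i * Q - 1) * (Q ^ i * (Q ^ a) ^ 2 * Q ^ e) := key
      _ = 2 * Q ^ k * ((Q ^ (i + 1) - 1) * Q ^ (2 * r + e - k - i)) := by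
          rw [pow_succ]
          linear_combination (-2 * (Q ^ i * Q - 1)) * hexp
  calc (∏ i ∈ Finset.Icc 1 (k - 1),
        ((Q ^ (r - i + 1) - 1) * (Q ^ (r + e - i) + 1)) /
          ((Q ^ (i + 1) - 1) * Q ^ (2 * r + e - k - i)))
      ≤ ∏ i ∈ Finset.Icc 1 (k - 1), (2 * Q ^ k / Q ^ (2 * i)) := by
        apply Finset.prod_le_prod _ hterm
        intro i hi
        rw [Finset.mem_Icc] at hi
        apply div_nonneg
        · have h1 : (1:ℚ) ≤ Q ^ (r - i + 1) := one_le_pow₀ hQ1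
          have h2 : (0:ℚ) < Q ^ (r + e - i) := pow_pos hQ0 _
          nlinarith
        · have h1 : (2:ℚ) ≤ Q ^ (i+1) := le_trans hQ2 (le_self_pow₀ hQ1 (by omega))
          have h2 : (0:ℚ) < Q ^ (2*r+e-k-i) := pow_pos hQ0 _
          nlinarith
    _ = 2 ^ (k - 1) := by
        rw [Finset.prod_div_distrib, Finset.prod_const, Finset.prod_pow_eq_pow_sum]
        have hcard : (Finset.Icc 1 (k-1)).card = k - 1 := by
          rw [Nat.card_Icc]; omega
        have hsum : (∑ i ∈ Finset.Icc 1 (k-1), 2 * i) = k * (k - 1) := by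
          rw [sum_Icc_two_mul]
          have : k - 1 + 1 = k := by omega
          rw [this]; ring
        rw [hcard, hsum, mul_pow, ← pow_mul]
        rw [mul_comm k (k-1), mul_div_assoc, div_self (by positivity), mul_one]
end

section
/- Let q ≥ 2 and let r ≥ 3 and e be natural numbers. Then (∏_{i=1}^{r-2}(q^{r-1+e-i}+1) - ∏_{i=1}^{r-2}(q^{r-2+e-i}+1)) / ∏_{i=1}^{r-1}(q^{r+e-i}+1) = (q^{r-2}-1) · q^e / ((q^{r+e-2}+1)(q^{r+e-1}+1)). -/
open Finset

lemma stmt_11_aux (f : ℕ → ℚ) (n c : ℕ) (h : n ≤ c) :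
    ∏ i ∈ Icc 1 n, f (c - i) = ∏ k ∈ Finset.range n, f (c - n + k) := by
  rw [← Finset.Ico_add_one_right_eq_Icc, Finset.prod_Ico_eq_prod_range]
  rw [← Finset.prod_range_reflect]
  apply Finset.prod_congr rfl
  intro k hk
  simp only [Finset.mem_range] at hk
  congr 1
  omega

/-- The fraction of generators of `P'` removed in the modification procedure. -/
theorem stmt_11 (q r e : ℕ) (hq : 2 ≤ q) (hr : 3 ≤ r) :
    ((∏ i ∈ Finset.Icc 1 (r - 2), ((q : ℚ) ^ (r - 1 + e - i) + 1)) -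
        (∏ i ∈ Finset.Icc 1 (r - 2), ((q : ℚ) ^ (r - 2 + e - i) + 1))) /
      (∏ i ∈ Finset.Icc 1 (r - 1), ((q : ℚ) ^ (r + e - i) + 1)) =
    ((q : ℚ) ^ (r - 2) - 1) * (q : ℚ) ^ e /
      (((q : ℚ) ^ (r + e - 2) + 1) * ((q : ℚ) ^ (r + e - 1) + 1)) := by
  obtain ⟨s, rfl⟩ : ∃ s, r = s + 3 := ⟨r - 3, by omega⟩
  have hq0 : (0 : ℚ) < (q : ℚ) := by exact_mod_cast Nat.lt_of_lt_of_le two_pos hq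
  set f : ℕ → ℚ := fun j => (q : ℚ) ^ j + 1 with hf
  have h1 : ∏ i ∈ Icc 1 (s + 3 - 2), ((q : ℚ) ^ (s + 3 - 1 + e - i) + 1)
      = ∏ k ∈ Finset.range (s + 1), f (e + 1 + k) := by
    have := stmt_11_aux f (s + 1) (s + 2 + e) (by omega)
    rw [show s + 2 + e - (s + 1) = e + 1 from by omega] at this
    rw [← this]
    apply Finset.prod_congr rfl fun i hi => by
      simp only [Finset.mem_Icc] at hi
      simp only [hf]
      all_goals congr 1 <;> omega
  have h2 : ∏ i ∈ Icc 1 (s + 3 - 2), ((q : ℚ) ^ (s + 3 - 2 + e - i) + 1)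
      = ∏ k ∈ Finset.range (s + 1), f (e + k) := by
    have := stmt_11_aux f (s + 1) (s + 1 + e) (by omega)
    rw [show s + 1 + e - (s + 1) = e from by omega] at this
    rw [← this]
    apply Finset.prod_congr rfl fun i hi => by
      simp only [Finset.mem_Icc] at hi
      simp only [hf]
      all_goals congr 1 <;> omega
  have h3 : ∏ i ∈ Icc 1 (s + 3 - 1), ((q : ℚ) ^ (s + 3 + e - i) + 1)
      = ∏ k ∈ Finset.range (s + 2), f (e + 1 + k) := by
    have := stmt_11_aux f (s + 2) (s + 3 + e) (by omega)
    rw [show s + 3 + e - (s + 2) = e + 1 from by omega] at this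
    rw [← this]
    apply Finset.prod_congr rfl fun i hi => by
      simp only [Finset.mem_Icc] at hi
      simp only [hf]
      all_goals congr 1 <;> omega
  rw [h1, h2, h3]
  have e1 : ∏ k ∈ Finset.range (s + 1), f (e + 1 + k)
      = (∏ k ∈ Finset.range s, f (e + 1 + k)) * f (s + e + 1) := by
    rw [Finset.prod_range_succ, show e + 1 + s = s + e + 1 from by omega]
  have e2 : ∏ k ∈ Finset.range (s + 1), f (e + k)
      = (∏ k ∈ Finset.range s, f (e + 1 + k)) * f e := by
    rw [Finset.prod_range_succ']
    congr 1
    exact Finset.prod_congr rfl fun k _ => by congr 1; omega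
  have e3 : ∏ k ∈ Finset.range (s + 2), f (e + 1 + k)
      = (∏ k ∈ Finset.range s, f (e + 1 + k)) * f (s + e + 1) * f (s + e + 2) := by
    rw [Finset.prod_range_succ, e1, show e + 1 + (s + 1) = s + e + 2 from by omega]
  rw [e3, e1, e2]
  set A : ℚ := ∏ k ∈ Finset.range s, f (e + 1 + k) with hA
  have hApos : 0 < A := Finset.prod_pos fun k _ => by positivity
  have hfpos : ∀ j, 0 < f j := fun j => by positivity
  rw [show s + 3 - 2 = s + 1 from rfl, show s + 3 + e - 2 = s + e + 1 from by omega,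
    show s + 3 + e - 1 = s + e + 2 from by omega]
  simp only [hf]
  have hx : ((q : ℚ) ^ (s + e + 1) + 1) ≠ 0 := by positivity
  have hz : ((q : ℚ) ^ (s + e + 2) + 1) ≠ 0 := by positivity
  field_simp
  ring
end
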